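/- Let t be a nonzero complex number with t ≠ 1 and t^2 ≠ 1, and set m = t^{-1}. Let S be a subspace of C^4 invariant under all eight Kronecker products φ̂_B(t)(g) ⊗ φ̂_B(m)(g). If e_2 ∈ S then e_1 ∈ S and e_4 ∈ S; if e_1 ∈ S then e_2 − e_3 ∈ S; if e_4 ∈ S then e_2 − e_3 ∈ S. Consequently, S contains none of the standard basis vectors e_1, e_2, e_3, e_4 unless S = C^4. -/
import Mathlib


open Matrix

/-- Kronecker product of two `2 × 2` complex matrices as a `4 × 4` matrix, with basis
ordering `e₁⊗e₁, e₁⊗e₂, e₂⊗e₁, e₂⊗e₂`. -/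
noncomputable def kron (A B : Matrix (Fin 2) (Fin 2) ℂ) : Matrix (Fin 4) (Fin 4) ℂ :=
  Matrix.of fun r c =>
    A ⟨r.val / 2, by have := r.isLt; omega⟩ ⟨c.val / 2, by have := c.isLt; omega⟩ *
    B ⟨r.val % 2, by have := r.isLt; omega⟩ ⟨c.val % 2, by have := c.isLt; omega⟩

/-- The six generator images `ε₁₂, ε₂₁, ε₁₃, ε₃₁, ε₃₂, ε₂₃` of `Cb₃` under the
`2`-dimensional representation `φ̂_G(t₁,t₂,t₃)`. -/
noncomputable def phiG3 (t1 t2 t3 : ℂ) : Fin 6 → Matrix (Fin 2) (Fin 2) ℂ :=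
  ![!![t2⁻¹, 0; t2⁻¹ * (t1 - 1), 1],
    !![1, t1⁻¹ * (t2 - 1); 0, t1⁻¹],
    !![t3⁻¹, 0; 0, 1],
    !![t1⁻¹, -(t1⁻¹ * (t2 - 1)); 0, 1],
    !![1, 0; -(t2⁻¹ * (t1 - 1)), t2⁻¹],
    !![1, 0; 0, t3⁻¹]]

/-- The eight generator images `ε₁₂, ε₂₁, ε₁₃, ε₃₁, ε₃₂, ε₂₃, α₁, α₂` of `C₃` under the
`2`-dimensional representation `φ̂_B(t)`. -/
noncomputable def phiB3 (t : ℂ) : Fin 8 → Matrix (Fin 2) (Fin 2) ℂ :=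
  ![!![t⁻¹, 0; 1 - t⁻¹, 1],
    !![1, 1 - t⁻¹; 0, t⁻¹],
    !![t⁻¹, 0; 0, 1],
    !![t⁻¹, t⁻¹ - 1; 0, 1],
    !![1, 0; t⁻¹ - 1, t⁻¹],
    !![1, 0; 0, t⁻¹],
    !![0, 1; 1, 0],
    !![1, 0; -1, -1]]

private lemma kron_eq_aux (A B : Matrix (Fin 2) (Fin 2) ℂ) : kron A B =
    !![A 0 0 * B 0 0, A 0 0 * B 0 1, A 0 1 * B 0 0, A 0 1 * B 0 1;
       A 0 0 * B 1 0, A 0 0 * B 1 1, A 0 1 * B 1 0, A 0 1 * B 1 1;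
       A 1 0 * B 0 0, A 1 0 * B 0 1, A 1 1 * B 0 0, A 1 1 * B 0 1;
       A 1 0 * B 1 0, A 1 0 * B 1 1, A 1 1 * B 1 0, A 1 1 * B 1 1] := by
  ext r c
  fin_cases r <;> fin_cases c <;> rfl

theorem stmt18 (t : ℂ) (ht : t ≠ 0) (ht1 : t ≠ 1) (ht2 : t ^ 2 ≠ 1)
    (S : Submodule ℂ (Fin 4 → ℂ))
    (hS : ∀ g : Fin 8, ∀ x ∈ S, (kron (phiB3 t g) (phiB3 t⁻¹ g)).mulVec x ∈ S) :
    ((Pi.single 1 1 : Fin 4 → ℂ) ∈ S →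
        (Pi.single 0 1 : Fin 4 → ℂ) ∈ S ∧ (Pi.single 3 1 : Fin 4 → ℂ) ∈ S) ∧
    ((Pi.single 0 1 : Fin 4 → ℂ) ∈ S →
        (Pi.single 1 1 : Fin 4 → ℂ) - Pi.single 2 1 ∈ S) ∧
    ((Pi.single 3 1 : Fin 4 → ℂ) ∈ S →
        (Pi.single 1 1 : Fin 4 → ℂ) - Pi.single 2 1 ∈ S) ∧
    (∀ i : Fin 4, (Pi.single i 1 : Fin 4 → ℂ) ∈ S → S = ⊤) := by
  have hti : t⁻¹ ≠ 0 := inv_ne_zero ht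
  have h1a : (1 : ℂ) - t⁻¹ ≠ 0 := by
    intro h
    have h' : t⁻¹ = 1 := by linear_combination -h
    have h2 : t * t⁻¹ = t * 1 := by rw [h']
    rw [mul_inv_cancel₀ ht, mul_one] at h2
    exact ht1 h2.symm
  have hat : t⁻¹ - t ≠ 0 := by
    intro h
    apply ht2
    have : t⁻¹ = t := by linear_combination h
    calc t ^ 2 = t * t := sq t
    _ = t * t⁻¹ := by rw [this]
    _ = 1 := mul_inv_cancel₀ ht
  have ht1' : t - 1 ≠ 0 := sub_ne_zero.mpr ht1
  have htp1 : t + 1 ≠ 0 := fun h => ht2 (by linear_combination (t - 1) * h)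
  have htsq : 1 - t ^ 2 ≠ 0 := fun h => ht2 (by linear_combination -h)
  have htsq' : t ^ 2 - 1 ≠ 0 := fun h => ht2 (by linear_combination h)
  have hc1 : t - t ^ 3 ≠ 0 := by
    intro h
    exact mul_ne_zero ht htsq (by linear_combination h)
  have hc2 : t ^ 3 - t ≠ 0 := by
    intro h
    exact mul_ne_zero ht htsq' (by linear_combination h)
  have hta : t - t⁻¹ ≠ 0 := fun h => hat (by linear_combination -h)
  have p0 : ∀ s : ℂ, phiB3 s 0 = !![s⁻¹, 0; 1 - s⁻¹, 1] := fun s => rfl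
  have p2 : ∀ s : ℂ, phiB3 s 2 = !![s⁻¹, 0; 0, 1] := fun s => rfl
  have p4 : ∀ s : ℂ, phiB3 s 4 = !![1, 0; s⁻¹ - 1, s⁻¹] := fun s => rfl
  have p6 : ∀ s : ℂ, phiB3 s 6 = !![0, 1; 1, 0] := fun s => rfl
  -- key vector identities
  have E1 : (kron (phiB3 t 6) (phiB3 t⁻¹ 6)).mulVec (Pi.single 3 1)
      = (Pi.single 0 1 : Fin 4 → ℂ) := by
    funext i
    fin_cases i <;>
      simp [kron_eq_aux, p0, p2, p4, p6, Matrix.mulVec, dotProduct, Fin.sum_univ_four, Pi.smul_apply, Pi.sub_apply, smul_eq_mul, Matrix.vecHead, Matrix.vecTail, Function.comp, show (Fin.succ 0 : Fin 4) = 1 from rfl, show (Fin.succ 1 : Fin 4) = 2 from rfl, show (Fin.succ 2 : Fin 4) = 3 from rfl,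
        Pi.single_apply]
  have E2 : (kron (phiB3 t 6) (phiB3 t⁻¹ 6)).mulVec (Pi.single 1 1)
      = (Pi.single 2 1 : Fin 4 → ℂ) := by
    funext i
    fin_cases i <;>
      simp [kron_eq_aux, p0, p2, p4, p6, Matrix.mulVec, dotProduct, Fin.sum_univ_four, Pi.smul_apply, Pi.sub_apply, smul_eq_mul, Matrix.vecHead, Matrix.vecTail, Function.comp, show (Fin.succ 0 : Fin 4) = 1 from rfl, show (Fin.succ 1 : Fin 4) = 2 from rfl, show (Fin.succ 2 : Fin 4) = 3 from rfl,
        Pi.single_apply]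
  have E3 : (kron (phiB3 t 6) (phiB3 t⁻¹ 6)).mulVec (Pi.single 2 1)
      = (Pi.single 1 1 : Fin 4 → ℂ) := by
    funext i
    fin_cases i <;>
      simp [kron_eq_aux, p0, p2, p4, p6, Matrix.mulVec, dotProduct, Fin.sum_univ_four, Pi.smul_apply, Pi.sub_apply, smul_eq_mul, Matrix.vecHead, Matrix.vecTail, Function.comp, show (Fin.succ 0 : Fin 4) = 1 from rfl, show (Fin.succ 1 : Fin 4) = 2 from rfl, show (Fin.succ 2 : Fin 4) = 3 from rfl,
        Pi.single_apply]
  have E4 : (kron (phiB3 t 0) (phiB3 t⁻¹ 0)).mulVec (Pi.single 1 1)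
      - t⁻¹ • (Pi.single 1 1 : Fin 4 → ℂ)
      = ((1 : ℂ) - t⁻¹) • (Pi.single 3 1 : Fin 4 → ℂ) := by
    funext i
    fin_cases i <;>
      simp [kron_eq_aux, p0, p2, p4, p6, Matrix.mulVec, dotProduct, Fin.sum_univ_four, Pi.smul_apply, Pi.sub_apply, smul_eq_mul, Matrix.vecHead, Matrix.vecTail, Function.comp, show (Fin.succ 0 : Fin 4) = 1 from rfl, show (Fin.succ 1 : Fin 4) = 2 from rfl, show (Fin.succ 2 : Fin 4) = 3 from rfl,
        Pi.single_apply] <;>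
      field_simp <;> ring
  have E5 : (kron (phiB3 t 0) (phiB3 t⁻¹ 0)).mulVec (Pi.single 0 1)
      - (kron (phiB3 t 4) (phiB3 t⁻¹ 4)).mulVec (Pi.single 0 1)
      = (t⁻¹ - t) • ((Pi.single 1 1 : Fin 4 → ℂ) - Pi.single 2 1) := by
    funext i
    fin_cases i <;>
      simp [kron_eq_aux, p0, p2, p4, p6, Matrix.mulVec, dotProduct, Fin.sum_univ_four, Pi.smul_apply, Pi.sub_apply, smul_eq_mul, Matrix.vecHead, Matrix.vecTail, Function.comp, show (Fin.succ 0 : Fin 4) = 1 from rfl, show (Fin.succ 1 : Fin 4) = 2 from rfl, show (Fin.succ 2 : Fin 4) = 3 from rfl,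
        Pi.single_apply] <;>
      field_simp <;> ring
  have E6 : t⁻¹ • ((Pi.single 1 1 : Fin 4 → ℂ) - Pi.single 2 1)
      - (kron (phiB3 t 2) (phiB3 t⁻¹ 2)).mulVec ((Pi.single 1 1 : Fin 4 → ℂ) - Pi.single 2 1)
      = (t - t⁻¹) • (Pi.single 2 1 : Fin 4 → ℂ) := by
    funext i
    fin_cases i <;>
      simp [kron_eq_aux, p0, p2, p4, p6, Matrix.mulVec, dotProduct, Fin.sum_univ_four, Pi.smul_apply, Pi.sub_apply, smul_eq_mul, Matrix.vecHead, Matrix.vecTail, Function.comp, show (Fin.succ 0 : Fin 4) = 1 from rfl, show (Fin.succ 1 : Fin 4) = 2 from rfl, show (Fin.succ 2 : Fin 4) = 3 from rfl,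
        Pi.single_apply] <;>
      field_simp <;> ring
  -- membership implications
  have h13 : (Pi.single 1 1 : Fin 4 → ℂ) ∈ S → (Pi.single 3 1 : Fin 4 → ℂ) ∈ S := by
    intro h
    have := S.smul_mem ((1 : ℂ) - t⁻¹)⁻¹ (S.sub_mem (hS 0 _ h) (S.smul_mem t⁻¹ h))
    rwa [E4, smul_smul, inv_mul_cancel₀ h1a, one_smul] at this
  have h30 : (Pi.single 3 1 : Fin 4 → ℂ) ∈ S → (Pi.single 0 1 : Fin 4 → ℂ) ∈ S := by
    intro h
    have := hS 6 _ h
    rwa [E1] at this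
  have h12 : (Pi.single 1 1 : Fin 4 → ℂ) ∈ S → (Pi.single 2 1 : Fin 4 → ℂ) ∈ S := by
    intro h
    have := hS 6 _ h
    rwa [E2] at this
  have h21 : (Pi.single 2 1 : Fin 4 → ℂ) ∈ S → (Pi.single 1 1 : Fin 4 → ℂ) ∈ S := by
    intro h
    have := hS 6 _ h
    rwa [E3] at this
  have h0v : (Pi.single 0 1 : Fin 4 → ℂ) ∈ S →
      (Pi.single 1 1 : Fin 4 → ℂ) - Pi.single 2 1 ∈ S := by
    intro h
    have := S.smul_mem (t⁻¹ - t)⁻¹ (S.sub_mem (hS 0 _ h) (hS 4 _ h))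
    rwa [E5, smul_smul, inv_mul_cancel₀ hat, one_smul] at this
  have hv2 : (Pi.single 1 1 : Fin 4 → ℂ) - Pi.single 2 1 ∈ S →
      (Pi.single 2 1 : Fin 4 → ℂ) ∈ S := by
    intro h
    have := S.smul_mem (t - t⁻¹)⁻¹ (S.sub_mem (S.smul_mem t⁻¹ h) (hS 2 _ h))
    rwa [E6, smul_smul, inv_mul_cancel₀ hta, one_smul] at this
  -- all four implies top
  have htop : (Pi.single 0 1 : Fin 4 → ℂ) ∈ S → (Pi.single 1 1 : Fin 4 → ℂ) ∈ S →
      (Pi.single 2 1 : Fin 4 → ℂ) ∈ S → (Pi.single 3 1 : Fin 4 → ℂ) ∈ S → S = ⊤ := by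
    intro h0 h1 h2 h3
    rw [eq_top_iff]
    intro x _
    have hx : x = x 0 • (Pi.single 0 1 : Fin 4 → ℂ) + x 1 • (Pi.single 1 1 : Fin 4 → ℂ)
        + x 2 • (Pi.single 2 1 : Fin 4 → ℂ) + x 3 • (Pi.single 3 1 : Fin 4 → ℂ) := by
      funext i
      fin_cases i <;> simp [Pi.single_apply]
    rw [hx]
    exact S.add_mem (S.add_mem (S.add_mem (S.smul_mem _ h0) (S.smul_mem _ h1))
      (S.smul_mem _ h2)) (S.smul_mem _ h3)
  refine ⟨fun h1 => ⟨h30 (h13 h1), h13 h1⟩, h0v, fun h3 => h0v (h30 h3), ?_⟩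
  intro i hi
  fin_cases i
  · have hv := h0v hi
    have h2 := hv2 hv
    have h1 : (Pi.single 1 1 : Fin 4 → ℂ) ∈ S := h21 h2
    exact htop hi h1 h2 (h13 h1)
  · exact htop (h30 (h13 hi)) hi (h12 hi) (h13 hi)
  · have h1 := h21 hi
    exact htop (h30 (h13 h1)) h1 hi (h13 h1)
  · have h0 := h30 hi
    have hv := h0v h0
    have h2 := hv2 hv
    have h1 := h21 h2
    exact htop h0 h1 h2 hi
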